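/- arXiv:2506.14859 — 2 statements merged into one kernel-verified Lean document; each statement's English description precedes it below -/
import Mathlib

section
/- In the two-colour unfair Pólya urn with m_b > m_w, the ratio W_n / B_n converges to 0 almost surely as n → ∞. -/
/-!
Let `T₀` be the initial number of balls. The conditional probability `B / (B + W)` of a black
draw at step `n` is at least `1 / (T₀ + n mb)`, so by Lévy's conditional Borel–Cantelli lemma
black balls are drawn infinitely often and `B n → ∞` almost surely. Once `B ≥ 2 mb mw` and
`T₀ ≤ K`, the ratio `W / B` is a nonnegative supermartingale whose conditional mean contracts by
the factor `1 - 1 / (3 (K + n mb))` at step `n`. The harmonic series diverges, so its means tend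
to `0`, and the almost sure limit of the supermartingale must then be `0` as well.
-/

open MeasureTheory ProbabilityTheory Filter Real

/-- A two-colour unfair Pólya urn: `B n`, `W n` are the numbers of black and white balls
after `n` draws.  At each step a ball is drawn uniformly at random; if it is black,
`mb` black balls are added, and if it is white, `mw` white balls are added.
The uniform drawing rule is encoded by the conditional probability (given the natural
filtration of the process) of a black draw being `B n / (B n + W n)`. -/
structure PolyaUrn (Ω : Type*) [MeasurableSpace Ω] where
  μ : Measure Ω
  isProb : IsProbabilityMeasure μ
  mb : ℕ
  mw : ℕ
  mb_pos : 0 < mb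
  mw_pos : 0 < mw
  B : ℕ → Ω → ℕ
  W : ℕ → Ω → ℕ
  measB : ∀ n, Measurable (B n)
  measW : ∀ n, Measurable (W n)
  /-- each step either adds `mb` black balls (black draw) or `mw` white balls (white draw) -/
  step : ∀ n ω, (B (n+1) ω = B n ω + mb ∧ W (n+1) ω = W n ω) ∨
                (B (n+1) ω = B n ω ∧ W (n+1) ω = W n ω + mw)
  /-- the natural filtration generated by the process `(B, W)` -/
  𝓕 : Filtration ℕ ‹MeasurableSpace Ω›
  h𝓕 : ∀ n, 𝓕 n = ⨆ i ∈ Set.Iic n, MeasurableSpace.comap (fun ω => (B i ω, W i ω)) inferInstance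
  /-- conditionally on the past, a black ball is drawn at step `n`
  with probability `B n / (B n + W n)` -/
  hcond : ∀ n, (μ[(fun ω => if B (n+1) ω = B n ω + mb then (1:ℝ) else 0) | 𝓕 n])
      =ᵐ[μ] fun ω => (B n ω : ℝ) / ((B n ω : ℝ) + (W n ω : ℝ))

open Finset Topology

theorem tendsto_sum_div_add_mul_atTop {c a b : ℝ} (hc : 0 < c) (ha : 0 < a) (hb : 0 ≤ b) :
    Tendsto (fun n : ℕ => ∑ k ∈ range n, c / (a + k * b)) atTop atTop := by
  refine tendsto_atTop_mono (fun n => ?_)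
    (Real.tendsto_sum_range_one_div_nat_succ_atTop.const_mul_atTop
      (div_pos hc (add_pos_of_pos_of_nonneg ha hb)))
  rw [mul_sum]
  refine sum_le_sum fun k _ => ?_
  rw [div_mul_div_comm, mul_one]
  apply div_le_div_of_nonneg_left hc.le (by positivity)
  nlinarith [(k.cast_nonneg : (0 : ℝ) ≤ k)]

theorem tendsto_zero_of_le_one_sub_mul {e δ : ℕ → ℝ} (he : ∀ n, 0 ≤ e n)
    (hrec : ∀ n, e (n + 1) ≤ (1 - δ n) * e n)
    (hδ : Tendsto (fun n => ∑ k ∈ range n, δ k) atTop atTop) :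
    Tendsto e atTop (𝓝 0) := by
  have hexp : ∀ n, e n ≤ e 0 * Real.exp (-∑ k ∈ range n, δ k) := by
    intro n
    induction n with
    | zero => simp
    | succ n ih =>
      calc e (n + 1) ≤ (1 - δ n) * e n := hrec n
        _ ≤ Real.exp (-δ n) * e n := by
          gcongr
          · exact he n
          · linarith [Real.add_one_le_exp (-δ n)]
        _ ≤ Real.exp (-δ n) * (e 0 * Real.exp (-∑ k ∈ range n, δ k)) := by gcongr
        _ = e 0 * Real.exp (-∑ k ∈ range (n + 1), δ k) := by
          rw [sum_range_succ, neg_add, Real.exp_add]; ring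
  have hlim : Tendsto (fun n => e 0 * Real.exp (-∑ k ∈ range n, δ k)) atTop (𝓝 0) := by
    simpa using (Real.tendsto_exp_atBot.comp (tendsto_neg_atTop_atBot.comp hδ)).const_mul (e 0)
  exact squeeze_zero he hexp hlim

theorem ae_tendsto_zero_of_condExp_le_one_sub_mul {Ω : Type*} {m0 : MeasurableSpace Ω}
    {μ : Measure Ω} [IsFiniteMeasure μ] {ℱ : Filtration ℕ m0} {f : ℕ → Ω → ℝ} {δ : ℕ → ℝ}
    (hadp : StronglyAdapted ℱ f) (hint : ∀ n, Integrable (f n) μ) (hf : ∀ n, 0 ≤ f n)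
    (hδ0 : ∀ n, 0 ≤ δ n) (hδ : Tendsto (fun n => ∑ k ∈ range n, δ k) atTop atTop)
    (hcond : ∀ n, μ[f (n + 1) | ℱ n] ≤ᵐ[μ] fun ω => (1 - δ n) * f n ω) :
    ∀ᵐ ω ∂μ, Tendsto (fun n => f n ω) atTop (𝓝 0) := by
  have hmean_rec : ∀ n, ∫ ω, f (n + 1) ω ∂μ ≤ (1 - δ n) * ∫ ω, f n ω ∂μ := fun n =>
    calc ∫ ω, f (n + 1) ω ∂μ = ∫ ω, (μ[f (n + 1) | ℱ n]) ω ∂μ := (integral_condExp (ℱ.le n)).symm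
      _ ≤ ∫ ω, (1 - δ n) * f n ω ∂μ :=
        integral_mono_ae integrable_condExp ((hint n).const_mul _) (hcond n)
      _ = (1 - δ n) * ∫ ω, f n ω ∂μ := integral_const_mul _ _
  have hmean : Tendsto (fun n => ∫ ω, f n ω ∂μ) atTop (𝓝 0) :=
    tendsto_zero_of_le_one_sub_mul (fun n => integral_nonneg (hf n)) hmean_rec hδ
  have hL1 : ∀ n, eLpNorm (f n) 1 μ = ENNReal.ofReal (∫ ω, f n ω ∂μ) := fun n => by
    rw [eLpNorm_one_eq_lintegral_enorm, ← ofReal_integral_norm_eq_lintegral_enorm (hint n)]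
    simp_rw [Real.norm_of_nonneg (hf n _)]
  -- `f` is a nonnegative supermartingale, so it is bounded in `L¹` by `∫ f 0` and converges a.s.
  have hconv : ∀ᵐ ω ∂μ, ∃ c, Tendsto (fun n => -f n ω) atTop (𝓝 c) := by
    have hanti : Antitone fun n => ∫ ω, f n ω ∂μ := antitone_nat_of_succ_le fun n =>
      (hmean_rec n).trans (mul_le_of_le_one_left (integral_nonneg (hf n)) (by linarith [hδ0 n]))
    refine (supermartingale_nat hadp hint fun n => (hcond n).trans (ae_of_all _ fun ω =>
      mul_le_of_le_one_left (hf n ω) (by linarith [hδ0 n]))).neg.exists_ae_tendsto_of_bdd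
      (R := (∫ ω, f 0 ω ∂μ).toNNReal) fun n => ?_
    change eLpNorm (-f n) 1 μ ≤ _
    rw [eLpNorm_neg, hL1]
    exact ENNReal.ofReal_le_ofReal (hanti (Nat.zero_le n))
  -- the means tend to `0`, so a subsequence tends to `0` a.s., which identifies the limit
  obtain ⟨ns, hns, hsub⟩ := (tendstoInMeasure_of_tendsto_eLpNorm one_ne_zero
    (fun n => (hint n).aestronglyMeasurable) aestronglyMeasurable_zero
    (by simpa [hL1] using ENNReal.tendsto_ofReal hmean)).exists_seq_tendsto_ae
  filter_upwards [hconv, hsub] with ω ⟨c, hc⟩ hsubω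
  have hc' : Tendsto (fun n => f n ω) atTop (𝓝 (-c)) := by simpa using hc.neg
  rwa [tendsto_nhds_unique (hc'.comp hns.tendsto_atTop) hsubω] at hc'

def MeasureTheory.Filtration.shift {Ω : Type*} {m0 : MeasurableSpace Ω}
    (ℱ : Filtration ℕ m0) (k : ℕ) : Filtration ℕ m0 where
  seq n := ℱ (k + n)
  mono' _ _ h := ℱ.mono (Nat.add_le_add_left h k)
  le' n := ℱ.le (k + n)

theorem expected_ratio_step_le {mb mw b w : ℝ} (hmw : 1 ≤ mw) (hm : mw + 1 ≤ mb)
    (hb : 2 * mb * mw ≤ b) (hw : 0 ≤ w) :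
    b / (b + w) * (w / (b + mb)) + (1 - b / (b + w)) * ((w + mw) / b) ≤
      (1 - (1 / 3) / (b + w)) * (w / b) := by
  have hb0 : 0 < b := by nlinarith
  have hbw : 0 < b + w := by linarith
  have hbm : 0 < b + mb := by linarith
  have hgain : (1 / 3) / (b + w) ≤ ((mb - mw) * b - mw * mb) / ((b + w) * (b + mb)) := by
    have h3 : b + mb ≤ 3 * ((mb - mw) * b - mw * mb) := by
      nlinarith [mul_nonneg (by linarith : 0 ≤ mb - mw - 1) hb0.le,
        mul_nonneg (by linarith : 0 ≤ mb) (by linarith : 0 ≤ mw - 1)]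
    rw [div_le_div_iff₀ hbw (by positivity)]
    nlinarith [mul_le_mul_of_nonneg_left h3 hbw.le]
  calc b / (b + w) * (w / (b + mb)) + (1 - b / (b + w)) * ((w + mw) / b)
      = (1 - ((mb - mw) * b - mw * mb) / ((b + w) * (b + mb))) * (w / b) := by
        field_simp
        ring
    _ ≤ (1 - (1 / 3) / (b + w)) * (w / b) := by gcongr

namespace PolyaUrn

variable {Ω : Type*} [MeasurableSpace Ω] (U : PolyaUrn Ω)

def blackDraw (n : ℕ) : Set Ω := {ω | U.B (n + 1) ω = U.B n ω + U.mb}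

instance (n : ℕ) : DecidablePred (· ∈ U.blackDraw n) := fun ω =>
  inferInstanceAs (Decidable (U.B (n + 1) ω = U.B n ω + U.mb))

noncomputable def blackProb (n : ℕ) (ω : Ω) : ℝ := U.B n ω / (U.B n ω + U.W n ω)

variable {U}

lemma succ_of_mem_blackDraw {n : ℕ} {ω : Ω} (h : ω ∈ U.blackDraw n) :
    U.B (n + 1) ω = U.B n ω + U.mb ∧ U.W (n + 1) ω = U.W n ω := by
  have := U.mb_pos
  rcases U.step n ω with h' | h'
  · exact h'
  · simp only [blackDraw, Set.mem_ofPred_eq] at h; omega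

lemma succ_of_notMem_blackDraw {n : ℕ} {ω : Ω} (h : ω ∉ U.blackDraw n) :
    U.B (n + 1) ω = U.B n ω ∧ U.W (n + 1) ω = U.W n ω + U.mw :=
  (U.step n ω).resolve_left fun h' => h h'.1

variable (U)

lemma monotone_B (ω : Ω) : Monotone fun n => U.B n ω :=
  monotone_nat_of_le_succ fun n => by rcases U.step n ω with ⟨h, -⟩ | ⟨h, -⟩ <;> omega

lemma total_le (hm : U.mw ≤ U.mb) (n : ℕ) (ω : Ω) :
    U.B n ω + U.W n ω ≤ U.B 0 ω + U.W 0 ω + n * U.mb := by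
  induction n with
  | zero => simp
  | succ n ih => rcases U.step n ω with ⟨h₁, h₂⟩ | ⟨h₁, h₂⟩ <;> rw [h₁, h₂] <;> nlinarith

lemma measurable_pair_of_le {i n : ℕ} (h : i ≤ n) :
    Measurable[U.𝓕 n] fun ω => (U.B i ω, U.W i ω) := by
  rw [measurable_iff_comap_le, U.h𝓕 n]
  exact le_biSup (fun i => MeasurableSpace.comap (fun ω => (U.B i ω, U.W i ω)) inferInstance) h

lemma measurable_B_of_le {i n : ℕ} (h : i ≤ n) : Measurable[U.𝓕 n] (U.B i) :=
  measurable_fst.comp (U.measurable_pair_of_le h)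

lemma measurable_W_of_le {i n : ℕ} (h : i ≤ n) : Measurable[U.𝓕 n] (U.W i) :=
  measurable_snd.comp (U.measurable_pair_of_le h)

lemma measurableSet_blackDraw (n : ℕ) : MeasurableSet[U.𝓕 (n + 1)] (U.blackDraw n) :=
  measurableSet_eq_fun (U.measurable_B_of_le le_rfl)
    ((U.measurable_B_of_le n.le_succ).add_const _)

lemma condExp_indicator_blackDraw (n : ℕ) :
    U.μ[(U.blackDraw n).indicator 1 | U.𝓕 n] =ᵐ[U.μ] U.blackProb n := by
  have hχ : (U.blackDraw n).indicator (1 : Ω → ℝ) =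
      fun ω => if U.B (n + 1) ω = U.B n ω + U.mb then 1 else 0 := by
    ext ω
    simp [blackDraw, Set.indicator_apply]
  rw [hχ]
  exact U.hcond n

lemma condExp_piecewise_blackDraw {n : ℕ} {φ ψ : Ω → ℝ}
    (hφ : StronglyMeasurable[U.𝓕 n] φ) (hψ : StronglyMeasurable[U.𝓕 n] ψ)
    (hφi : Integrable φ U.μ) (hψi : Integrable ψ U.μ) :
    U.μ[(U.blackDraw n).piecewise φ ψ | U.𝓕 n] =ᵐ[U.μ]
      fun ω => U.blackProb n ω * φ ω + (1 - U.blackProb n ω) * ψ ω := by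
  have := U.isProb
  have hχ : Integrable ((U.blackDraw n).indicator (1 : Ω → ℝ)) U.μ :=
    (integrable_const 1).indicator (U.𝓕.le _ _ (U.measurableSet_blackDraw n))
  have hsplit : (U.blackDraw n).piecewise φ ψ = (φ - ψ) * (U.blackDraw n).indicator 1 + ψ := by
    ext ω
    by_cases h : ω ∈ U.blackDraw n <;> simp [h]
  have hprod : Integrable ((φ - ψ) * (U.blackDraw n).indicator 1) U.μ :=
    (hφi.sub hψi).mul_bdd (c := 1) hχ.aestronglyMeasurable
      (ae_of_all _ fun ω => (norm_indicator_le_norm_self _ ω).trans (by simp))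
  rw [hsplit]
  filter_upwards [condExp_add hprod hψi (U.𝓕 n),
    condExp_mul_of_stronglyMeasurable_left (hφ.sub hψ) hprod hχ,
    U.condExp_indicator_blackDraw n] with ω hadd hmul hp
  rw [hadd, Pi.add_apply, hmul, condExp_of_stronglyMeasurable (U.𝓕.le n) hψ hψi, Pi.mul_apply, hp]
  simp only [Pi.sub_apply]
  ring

lemma sum_indicator_blackDraw_le (n : ℕ) (ω : Ω) :
    ∑ k ∈ range n, (U.blackDraw k).indicator (1 : Ω → ℝ) ω ≤ U.B n ω := by
  induction n with
  | zero => simp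
  | succ n ih =>
    rw [sum_range_succ]
    by_cases h : ω ∈ U.blackDraw n
    · have hB : (U.B (n + 1) ω : ℝ) = U.B n ω + U.mb := by
        exact_mod_cast (succ_of_mem_blackDraw h).1
      have : (1 : ℝ) ≤ U.mb := by exact_mod_cast U.mb_pos
      simp only [Set.indicator_of_mem h, Pi.one_apply, hB]
      linarith
    · simp only [Set.indicator_of_notMem h, (succ_of_notMem_blackDraw h).1]
      linarith

lemma one_div_total_le_blackProb (hm : U.mw ≤ U.mb) (hB0 : ∀ ω, 1 ≤ U.B 0 ω) (n : ℕ) (ω : Ω) :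
    1 / ((U.B 0 ω + U.W 0 ω : ℝ) + n * U.mb) ≤ U.blackProb n ω := by
  have hB : (1 : ℝ) ≤ U.B n ω := by exact_mod_cast (hB0 ω).trans (U.monotone_B ω n.zero_le)
  have htotal : (U.B n ω + U.W n ω : ℝ) ≤ (U.B 0 ω + U.W 0 ω : ℝ) + n * U.mb := by
    exact_mod_cast U.total_le hm n ω
  calc 1 / ((U.B 0 ω + U.W 0 ω : ℝ) + n * U.mb) ≤ 1 / (U.B n ω + U.W n ω) :=
        one_div_le_one_div_of_le (by positivity) htotal
    _ ≤ U.blackProb n ω := by unfold blackProb; gcongr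

theorem tendsto_B_atTop (hm : U.mw ≤ U.mb) (hB0 : ∀ ω, 1 ≤ U.B 0 ω) :
    ∀ᵐ ω ∂U.μ, Tendsto (fun n => U.B n ω) atTop atTop := by
  have := U.isProb
  -- a black draw at step `n - 1`; `s 0` is empty
  let s : ℕ → Set Ω := fun n => {ω | U.B n ω = U.B (n - 1) ω + U.mb}
  have hs : ∀ n, MeasurableSet[U.𝓕 n] (s n) := fun n =>
    measurableSet_eq_fun (U.measurable_B_of_le le_rfl)
      ((U.measurable_B_of_le (n.sub_le 1)).add_const _)
  have hs_succ : ∀ k, s (k + 1) = U.blackDraw k := fun k => rfl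
  filter_upwards [tendsto_sum_indicator_atTop_iff' (μ := U.μ) hs,
    ae_all_iff.2 U.condExp_indicator_blackDraw] with ω hlevy hp
  simp only [hs_succ] at hlevy
  refine tendsto_natCast_atTop_iff.1
    (tendsto_atTop_mono (U.sum_indicator_blackDraw_le · ω) (hlevy.2 ?_))
  have hT : (0 : ℝ) < U.B 0 ω + U.W 0 ω := by have := hB0 ω; positivity
  refine tendsto_atTop_mono (fun n => sum_le_sum fun k _ => ?_)
    (tendsto_sum_div_add_mul_atTop one_pos hT (Nat.cast_nonneg U.mb))
  rw [hp k]
  exact U.one_div_total_le_blackProb hm hB0 k ω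

/-- On this event `B` has passed the threshold `2 mb mw` by time `m`, beyond which `W / B`
contracts in conditional mean, and the urn holds at most `K + j mb` balls at every time `j`. -/
def goodEvent (m K : ℕ) : Set Ω := {ω | 2 * U.mb * U.mw ≤ U.B m ω ∧ U.B 0 ω + U.W 0 ω ≤ K}

noncomputable def ratioPlus (j : ℕ) (a b : ℝ) (ω : Ω) : ℝ := ((U.W j ω : ℝ) + a) / (U.B j ω + b)

noncomputable def localRatio (m K n : ℕ) : Ω → ℝ :=
  (U.goodEvent m K).indicator (U.ratioPlus (m + n) 0 0)

lemma measurableSet_goodEvent {m K i : ℕ} (h : m ≤ i) :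
    MeasurableSet[U.𝓕 i] (U.goodEvent m K) :=
  (U.measurable_B_of_le h measurableSet_Ici).inter
    (((U.measurable_B_of_le i.zero_le).add (U.measurable_W_of_le i.zero_le)) measurableSet_Iic)

lemma measurable_indicator_ratioPlus {m K j i : ℕ} (hm : m ≤ i) (hj : j ≤ i) (a b : ℝ) :
    Measurable[U.𝓕 i] ((U.goodEvent m K).indicator (U.ratioPlus j a b)) :=
  (((measurable_from_top.comp (U.measurable_W_of_le hj)).add_const a).div
    ((measurable_from_top.comp (U.measurable_B_of_le hj)).add_const b)).indicator
    (U.measurableSet_goodEvent hm)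

lemma integrable_indicator_ratioPlus (hm : U.mw ≤ U.mb) (hB0 : ∀ ω, 1 ≤ U.B 0 ω)
    (m K j : ℕ) {a b : ℝ} (ha : 0 ≤ a) (hb : 0 ≤ b) :
    Integrable ((U.goodEvent m K).indicator (U.ratioPlus j a b)) U.μ := by
  have := U.isProb
  refine Integrable.of_bound ((U.measurable_indicator_ratioPlus (le_max_left m j)
    (le_max_right m j) a b).mono (U.𝓕.le _) le_rfl).aestronglyMeasurable
    (K + j * U.mb + a) (ae_of_all _ fun ω => ?_)
  by_cases hA : ω ∈ U.goodEvent m K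
  · have hB : (1 : ℝ) ≤ U.B j ω + b := by
      have : (1 : ℝ) ≤ U.B j ω := by exact_mod_cast (hB0 ω).trans (U.monotone_B ω j.zero_le)
      linarith
    have hW : (U.W j ω : ℝ) ≤ K + j * U.mb := by
      have := U.total_le hm j ω
      have := hA.2
      exact_mod_cast (by omega : U.W j ω ≤ K + j * U.mb)
    rw [Set.indicator_of_mem hA, Real.norm_of_nonneg (by unfold ratioPlus; positivity)]
    calc U.ratioPlus j a b ω ≤ (U.W j ω : ℝ) + a := div_le_self (by positivity) hB
      _ ≤ K + j * U.mb + a := by linarith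
  · rw [Set.indicator_of_notMem hA, norm_zero]
    positivity

lemma localRatio_succ (m K n : ℕ) :
    U.localRatio m K (n + 1) = (U.blackDraw (m + n)).piecewise
      ((U.goodEvent m K).indicator (U.ratioPlus (m + n) 0 U.mb))
      ((U.goodEvent m K).indicator (U.ratioPlus (m + n) U.mw 0)) := by
  ext ω
  by_cases hA : ω ∈ U.goodEvent m K
  · by_cases h : ω ∈ U.blackDraw (m + n)
    · obtain ⟨hB, hW⟩ := succ_of_mem_blackDraw h
      simp [localRatio, ratioPlus, hA, h, ← add_assoc, hB, hW]
    · obtain ⟨hB, hW⟩ := succ_of_notMem_blackDraw h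
      simp [localRatio, ratioPlus, hA, h, ← add_assoc, hB, hW]
  · simp [localRatio, hA, Set.piecewise]

lemma condExp_localRatio_le (hm : U.mw < U.mb) (hB0 : ∀ ω, 1 ≤ U.B 0 ω) (m K n : ℕ) :
    U.μ[U.localRatio m K (n + 1) | U.𝓕 (m + n)] ≤ᵐ[U.μ]
      fun ω => (1 - (1 / 3) / ((K + m * U.mb : ℝ) + n * U.mb)) * U.localRatio m K n ω := by
  have hmn := m.le_add_right n
  rw [localRatio_succ]
  filter_upwards [U.condExp_piecewise_blackDraw
    (U.measurable_indicator_ratioPlus hmn le_rfl _ _).stronglyMeasurable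
    (U.measurable_indicator_ratioPlus hmn le_rfl _ _).stronglyMeasurable
    (U.integrable_indicator_ratioPlus hm.le hB0 m K _ le_rfl (Nat.cast_nonneg _))
    (U.integrable_indicator_ratioPlus hm.le hB0 m K _ (Nat.cast_nonneg _) le_rfl)] with ω hω
  rw [hω]
  by_cases hA : ω ∈ U.goodEvent m K
  · simp only [localRatio, Set.indicator_of_mem hA, ratioPlus, blackProb, add_zero]
    have hb : (2 * U.mb * U.mw : ℝ) ≤ U.B (m + n) ω := by
      exact_mod_cast hA.1.trans (U.monotone_B ω hmn)
    have htotal : (U.B (m + n) ω + U.W (m + n) ω : ℝ) ≤ (K + m * U.mb : ℝ) + n * U.mb := by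
      have h₁ : (U.B (m + n) ω + U.W (m + n) ω : ℝ) ≤ U.B 0 ω + U.W 0 ω + (m + n : ℕ) * U.mb := by
        exact_mod_cast U.total_le hm.le (m + n) ω
      have h₂ : (U.B 0 ω + U.W 0 ω : ℝ) ≤ K := by exact_mod_cast hA.2
      push_cast at h₁
      linarith
    have hB : (1 : ℝ) ≤ U.B (m + n) ω := by
      exact_mod_cast (hB0 ω).trans (U.monotone_B ω (m + n).zero_le)
    refine (expected_ratio_step_le (by exact_mod_cast U.mw_pos) (by exact_mod_cast hm) hb
      (Nat.cast_nonneg _)).trans ?_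
    gcongr
  · simp [localRatio, hA]

theorem ae_tendsto_localRatio (hm : U.mw < U.mb) (hB0 : ∀ ω, 1 ≤ U.B 0 ω) (m K : ℕ)
    (hK : 0 < K) : ∀ᵐ ω ∂U.μ, Tendsto (fun n => U.localRatio m K n ω) atTop (𝓝 0) := by
  have := U.isProb
  exact ae_tendsto_zero_of_condExp_le_one_sub_mul (ℱ := U.𝓕.shift m)
    (fun n => (U.measurable_indicator_ratioPlus (m.le_add_right n) le_rfl 0 0).stronglyMeasurable)
    (fun n => U.integrable_indicator_ratioPlus hm.le hB0 m K (m + n) le_rfl le_rfl)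
    (fun n => Set.indicator_nonneg fun ω _ => by unfold ratioPlus; positivity)
    (fun n => by positivity)
    (tendsto_sum_div_add_mul_atTop (by norm_num)
      (add_pos_of_pos_of_nonneg (by exact_mod_cast hK) (by positivity)) (Nat.cast_nonneg _))
    (U.condExp_localRatio_le hm hB0 m K)

end PolyaUrn

theorem stmt1_general {Ω : Type*} [MeasurableSpace Ω] (U : PolyaUrn Ω)
    (hm : U.mw < U.mb) (hB0 : ∀ ω, 1 ≤ U.B 0 ω) :
    ∀ᵐ ω ∂U.μ, Tendsto (fun n => (U.W n ω : ℝ) / (U.B n ω : ℝ)) atTop (nhds 0) := by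
  have hlocal : ∀ᵐ ω ∂U.μ, ∀ m K : ℕ, Tendsto (fun n => U.localRatio m (K + 1) n ω) atTop (𝓝 0) :=
    ae_all_iff.2 fun m => ae_all_iff.2 fun K => U.ae_tendsto_localRatio hm hB0 m (K + 1) K.succ_pos
  filter_upwards [U.tendsto_B_atTop hm.le hB0, hlocal] with ω hB hω
  obtain ⟨m, hmB⟩ := (hB.eventually_ge_atTop (2 * U.mb * U.mw)).exists
  have hA : ω ∈ U.goodEvent m (U.B 0 ω + U.W 0 ω - 1 + 1) := ⟨hmB, by omega⟩
  rw [← tendsto_add_atTop_iff_nat m]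
  refine (hω m (U.B 0 ω + U.W 0 ω - 1)).congr fun n => ?_
  simp [PolyaUrn.localRatio, Set.indicator_of_mem hA, PolyaUrn.ratioPlus, n.add_comm m]

/-- In the two-colour unfair Pólya urn with `mb > mw`, the ratio `W n / B n`
converges to `0` almost surely. -/
theorem stmt1 {Ω : Type*} [MeasurableSpace Ω] (U : PolyaUrn Ω)
    (hm : U.mw < U.mb) (hB0 : ∀ ω, 1 ≤ U.B 0 ω) (hW0 : ∀ ω, 1 ≤ U.W 0 ω) :
    ∀ᵐ ω ∂U.μ, Tendsto (fun n => (U.W n ω : ℝ) / (U.B n ω : ℝ)) atTop (nhds 0) :=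
  stmt1_general U hm hB0
end

section
/- Consider the q-colour unfair Pólya urn with m_1 ≥ m_j for all j ≠ 1. If initially colour 1 has a plurality (strictly more balls than each other colour individually), then with positive probability colour 1 has a plurality at every time n ≥ 0. -/
/-!
The rival weight `W = ∑_{j ≠ c} X_j / (X_j + X_c)` is a bounded supermartingale, because a draw
of colour `c` adds at least as many balls as any other draw; and `W ≥ 1/2` as soon as colour `c`
loses its plurality. With positive probability the initial configuration has at most `K` rival
balls and the first `N = 4K + 1` draws are all of colour `c`; on that event `W_N ≤ K / N ≤ 1/4`.
Stopping `W` when the plurality is first lost and freezing it at `1/2` afterwards keeps a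
supermartingale, so conditionally on that event the plurality is lost before any time `n` with
probability at most `1/2`.
-/

open MeasureTheory ProbabilityTheory Filter Real

/-- A `q`-colour unfair Pólya urn: `X n i` is the number of balls of colour `i` after `n`
draws. At each step a ball is drawn uniformly at random; a draw of colour `i` adds `m i`
balls of colour `i`. The uniform drawing rule is encoded by the conditional probability
(given the natural filtration) of drawing colour `i` being `X n i / ∑ j, X n j`. -/
structure PolyaUrnQ (q : ℕ) (Ω : Type*) [MeasurableSpace Ω] where
  μ : Measure Ω
  isProb : IsProbabilityMeasure μ
  m : Fin q → ℕ
  m_pos : ∀ i, 0 < m i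
  X : ℕ → Fin q → Ω → ℕ
  measX : ∀ n i, Measurable (X n i)
  /-- at each step, some colour `i` is drawn and `m i` balls of colour `i` are added -/
  step : ∀ n ω, ∃ i : Fin q, ∀ j : Fin q,
      X (n+1) j ω = X n j ω + (if j = i then m i else 0)
  /-- the natural filtration generated by the process `X` -/
  𝓕 : Filtration ℕ ‹MeasurableSpace Ω›
  h𝓕 : ∀ n, 𝓕 n = ⨆ i ∈ Set.Iic n, MeasurableSpace.comap (fun ω j => X i j ω) inferInstance
  /-- conditionally on the past, colour `i` is drawn at step `n`
  with probability `X n i / ∑ j, X n j` -/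
  hcond : ∀ n (i : Fin q),
      (μ[(fun ω => if X (n+1) i ω = X n i ω + m i then (1:ℝ) else 0) | 𝓕 n])
        =ᵐ[μ] fun ω => (X n i ω : ℝ) / (∑ j : Fin q, (X n j ω : ℝ))

namespace PolyaUrnQ

section States

variable {q : ℕ} (c : Fin q)

def HasPlurality (x : Fin q → ℕ) : Prop := ∀ j, j ≠ c → x j < x c

noncomputable def rivalRatio (j : Fin q) (x : Fin q → ℕ) : ℝ := (x j : ℝ) / (x j + x c)

noncomputable def rivalWeight (x : Fin q → ℕ) : ℝ := ∑ j ∈ Finset.univ.erase c, rivalRatio c j x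

variable {c}

theorem rivalRatio_nonneg (j : Fin q) (x : Fin q → ℕ) : 0 ≤ rivalRatio c j x := by
  unfold rivalRatio; positivity

theorem rivalWeight_nonneg (x : Fin q → ℕ) : 0 ≤ rivalWeight c x :=
  Finset.sum_nonneg fun j _ => rivalRatio_nonneg j x

theorem rivalWeight_le (x : Fin q → ℕ) : rivalWeight c x ≤ q :=
  calc rivalWeight c x ≤ ∑ _j ∈ Finset.univ.erase c, (1 : ℝ) :=
        Finset.sum_le_sum fun _ _ => div_le_one_of_le₀ (by simp) (by positivity)
    _ ≤ q := by simp

theorem half_le_rivalWeight {x : Fin q → ℕ} (hx : 0 < x c) (h : ¬ HasPlurality c x) :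
    1 / 2 ≤ rivalWeight c x := by
  obtain ⟨j, hjc, hj⟩ : ∃ j, j ≠ c ∧ x c ≤ x j := by simpa [HasPlurality] using h
  have hxj : (x c : ℝ) ≤ x j := by exact_mod_cast hj
  have hxc : (0 : ℝ) < x c := by exact_mod_cast hx
  calc (1 : ℝ) / 2 ≤ x j / (x j + x c) := by
        rw [div_le_div_iff₀ two_pos (by positivity)]; linarith
    _ ≤ rivalWeight c x :=
        Finset.single_le_sum (f := fun j => rivalRatio c j x)
          (fun j _ => rivalRatio_nonneg j x) (Finset.mem_erase.2 ⟨hjc, Finset.mem_univ j⟩)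

theorem HasPlurality.add_nsmul_single {x : Fin q → ℕ} (h : HasPlurality c x) (k v : ℕ) :
    HasPlurality c (x + k • Pi.single c v) := by
  intro j hj
  simpa [hj] using (h j hj).trans_le (Nat.le_add_right _ _)

theorem rivalWeight_add_nsmul_single_le (x : Fin q → ℕ) {k v : ℕ} (hk : 0 < k) (hv : 0 < v) :
    rivalWeight c (x + k • Pi.single c v) ≤ (∑ j ∈ Finset.univ.erase c, (x j : ℝ)) / k := by
  rw [rivalWeight, Finset.sum_div]
  refine Finset.sum_le_sum fun j hj => ?_
  have hjc := Finset.ne_of_mem_erase hj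
  rw [rivalRatio]
  have hkv : (k : ℝ) ≤ k * v := le_mul_of_one_le_right (by positivity) (by exact_mod_cast hv)
  simp only [Pi.add_apply, Pi.smul_apply, Pi.single_eq_same, Pi.single_eq_of_ne hjc, smul_eq_mul,
    mul_zero, add_zero, Nat.cast_add, Nat.cast_mul]
  exact div_le_div_of_nonneg_left (by positivity) (by exact_mod_cast hk) (by linarith [hkv])

end States

section Drift

variable {q : ℕ} {c : Fin q}

theorem drift_ratio_nonpos {a b mj mc : ℝ} (ha : 0 ≤ a) (hb : 0 < b) (hmj : 0 ≤ mj)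
    (hm : mj ≤ mc) :
    a * ((a + mj) / (a + mj + b) - a / (a + b)) + b * (a / (a + (b + mc)) - a / (a + b)) ≤ 0 := by
  have h1 : a + (b + mc) ≠ 0 := by linarith
  have h2 : a + b + mc ≠ 0 := by linarith
  have key : a * ((a + mj) / (a + mj + b) - a / (a + b)) + b * (a / (a + (b + mc)) - a / (a + b))
      = a * b / (a + b) * (mj / (a + b + mj) - mc / (a + b + mc)) := by
    field_simp
    ring
  rw [key]
  refine mul_nonpos_of_nonneg_of_nonpos (by positivity) (sub_nonpos.2 ?_)
  rw [div_le_div_iff₀ (by linarith) (by linarith)]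
  nlinarith [mul_le_mul_of_nonneg_left hm (by linarith : 0 ≤ a + b)]

theorem sum_mul_rivalRatio_add_single_le (m : Fin q → ℕ) (hm : ∀ j, m j ≤ m c) {x : Fin q → ℕ}
    (hx : 0 < x c) {j : Fin q} (hjc : j ≠ c) :
    ∑ i, (x i : ℝ) / (∑ k, (x k : ℝ)) * rivalRatio c j (x + Pi.single i (m i))
      ≤ rivalRatio c j x := by
  set S : ℝ := ∑ k, (x k : ℝ)
  have hS : 0 < S := lt_of_lt_of_le (Nat.cast_pos.2 hx)
    (Finset.single_le_sum (f := fun k => (x k : ℝ)) (fun _ _ => by positivity) (Finset.mem_univ c))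
  have hp : ∑ i, (x i : ℝ) / S = 1 := by rw [← Finset.sum_div, div_self hS.ne']
  have hsplit : ∑ i, (x i : ℝ) / S * (rivalRatio c j (x + Pi.single i (m i)) - rivalRatio c j x)
      = (x j : ℝ) / S * (rivalRatio c j (x + Pi.single j (m j)) - rivalRatio c j x)
        + (x c : ℝ) / S * (rivalRatio c j (x + Pi.single c (m c)) - rivalRatio c j x) :=
    Fintype.sum_eq_add j c hjc fun i ⟨hij, hic⟩ => by
      simp [rivalRatio, Ne.symm hij, Ne.symm hic]
  have hdrift := drift_ratio_nonpos (Nat.cast_nonneg (x j)) (Nat.cast_pos.2 hx : (0 : ℝ) < x c)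
    (Nat.cast_nonneg (m j)) (by exact_mod_cast hm j : (m j : ℝ) ≤ m c)
  calc ∑ i, (x i : ℝ) / S * rivalRatio c j (x + Pi.single i (m i))
      = rivalRatio c j x
          + ∑ i, (x i : ℝ) / S * (rivalRatio c j (x + Pi.single i (m i)) - rivalRatio c j x) := by
        simp only [mul_sub, Finset.sum_sub_distrib, ← Finset.sum_mul, hp]; ring
    _ ≤ rivalRatio c j x := by
        rw [hsplit]
        simp only [rivalRatio, Pi.add_apply, Pi.single_eq_same, Pi.single_eq_of_ne hjc,
          Pi.single_eq_of_ne hjc.symm, add_zero, Nat.cast_add]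
        rw [div_mul_eq_mul_div, div_mul_eq_mul_div, ← add_div]
        linarith [div_nonpos_of_nonpos_of_nonneg hdrift hS.le]

theorem sum_mul_rivalWeight_add_single_le (m : Fin q → ℕ) (hm : ∀ j, m j ≤ m c)
    {x : Fin q → ℕ} (hx : 0 < x c) :
    ∑ i, (x i : ℝ) / (∑ k, (x k : ℝ)) * rivalWeight c (x + Pi.single i (m i))
      ≤ rivalWeight c x := by
  simp only [rivalWeight, Finset.mul_sum]
  rw [Finset.sum_comm]
  exact Finset.sum_le_sum fun j hj =>
    sum_mul_rivalRatio_add_single_le m hm hx (Finset.ne_of_mem_erase hj)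

end Drift

end PolyaUrnQ

section Stopping

variable {Ω : Type*} {m0 : MeasurableSpace Ω} {μ : Measure Ω} {ℱ : Filtration ℕ m0}

theorem measurableSet_forall_lt {P : ℕ → Ω → Prop} (hP : ∀ n, MeasurableSet[ℱ n] {ω | P n ω})
    {n k : ℕ} (h : n ≤ k + 1) : MeasurableSet[ℱ k] {ω | ∀ i < n, P i ω} := by
  simp only [Set.ofPred_forall]
  exact MeasurableSet.iInter fun i => MeasurableSet.iInter fun hi => ℱ.mono (by omega) _ (hP i)

open scoped Classical in
theorem MeasureTheory.Supermartingale.piecewise_forall_lt [IsFiniteMeasure μ] {W : ℕ → Ω → ℝ}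
    (hW : Supermartingale W ℱ μ) {P : ℕ → Ω → Prop} (hP : ∀ n, MeasurableSet[ℱ n] {ω | P n ω})
    {a : ℝ} (ha : ∀ n ω, ¬ P n ω → a ≤ W n ω) :
    Supermartingale (fun n => {ω | ∀ k < n, P k ω}.piecewise (W n) fun _ => a) ℱ μ := by
  have hG (n k : ℕ) (h : n ≤ k + 1) := measurableSet_forall_lt hP h
  refine supermartingale_nat (fun n => ?_) (fun n => ?_) fun n => ?_
  · exact (hW.stronglyAdapted n).piecewise (hG n n (by omega)) stronglyMeasurable_const
  · exact Integrable.piecewise (ℱ.le n _ (hG n n (by omega))) (hW.integrable n).integrableOn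
      (integrable_const a).integrableOn
  set G := {ω | ∀ k < n + 1, P k ω}
  have hGm : MeasurableSet[ℱ n] G := hG (n + 1) n le_rfl
  have hconst : μ[Gᶜ.indicator fun _ => a | ℱ n] = Gᶜ.indicator fun _ => a :=
    condExp_of_stronglyMeasurable (ℱ.le n) (stronglyMeasurable_const.indicator hGm.compl)
      ((integrable_const a).indicator (ℱ.le n _ hGm.compl))
  rw [← Set.indicator_add_compl_eq_piecewise]
  filter_upwards [condExp_add ((hW.integrable (n + 1)).indicator (ℱ.le n _ hGm))
      ((integrable_const a).indicator (ℱ.le n _ hGm.compl)) (ℱ n),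
    condExp_indicator (hW.integrable (n + 1)) hGm, hW.condExp_ae_le (Nat.le_succ n)]
    with ω hadd hind hle
  rw [hadd, Pi.add_apply, hind, hconst]
  by_cases hω : ω ∈ G
  · have hω' : ω ∈ {ω | ∀ k < n, P k ω} := fun k hk => hω k (by omega)
    simp [hω, hω', hle]
  · by_cases hω' : ω ∈ {ω | ∀ k < n, P k ω}
    · have hPn : ¬ P n ω := fun hPn => hω fun k hk => by
        rcases Nat.lt_succ_iff_lt_or_eq.1 hk with hk | rfl
        exacts [hω' k hk, hPn]
      simp [hω, hω', ha n ω hPn]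
    · simp [hω, hω']

open scoped Classical in
theorem MeasureTheory.Supermartingale.mul_measureReal_diff_forall_lt_le [IsFiniteMeasure μ]
    {W : ℕ → Ω → ℝ} (hW : Supermartingale W ℱ μ) (hW0 : ∀ n ω, 0 ≤ W n ω)
    {P : ℕ → Ω → Prop} (hP : ∀ n, MeasurableSet[ℱ n] {ω | P n ω})
    {a : ℝ} (ha0 : 0 ≤ a) (ha : ∀ n ω, ¬ P n ω → a ≤ W n ω)
    {N : ℕ} {A : Set Ω} (hA : MeasurableSet[ℱ N] A) (hAP : ∀ ω ∈ A, ∀ k < N, P k ω)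
    {r : ℝ} (hAW : ∀ ω ∈ A, W N ω ≤ r) {n : ℕ} (hn : N ≤ n) :
    a * μ.real (A \ {ω | ∀ k < n, P k ω}) ≤ r * μ.real A := by
  set V := fun n => {ω | ∀ k < n, P k ω}.piecewise (W n) fun _ => a
  have hV := hW.piecewise_forall_lt hP ha
  have hV0 (ω : Ω) : 0 ≤ V n ω := by
    by_cases hω : ω ∈ {ω | ∀ k < n, P k ω} <;> simp [V, hω, hW0 n ω, ha0]
  have hAm := ℱ.le N _ hA
  have hGm := ℱ.le n _ (measurableSet_forall_lt hP (Nat.le_succ n))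
  calc a * μ.real (A \ {ω | ∀ k < n, P k ω})
      ≤ ∫ ω in A \ {ω | ∀ k < n, P k ω}, V n ω ∂μ :=
        setIntegral_ge_of_const_le_real (hAm.diff hGm) (measure_ne_top _ _)
          (fun ω hω => by simp [V, hω.2]) (hV.integrable n).integrableOn
    _ ≤ ∫ ω in A, V n ω ∂μ :=
        setIntegral_mono_set (hV.integrable n).integrableOn (Eventually.of_forall hV0)
          (Eventually.of_forall Set.sdiff_subset)
    _ ≤ ∫ ω in A, V N ω ∂μ := hV.setIntegral_le hn hA
    _ ≤ ∫ _ in A, r ∂μ :=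
        setIntegral_mono_on (hV.integrable N).integrableOn (integrableOn_const (measure_ne_top _ _))
          hAm fun ω hω => by
            have hωG : ω ∈ {ω | ∀ k < N, P k ω} := hAP ω hω
            simpa [V, Set.piecewise_eq_of_mem _ _ _ hωG] using hAW ω hω
    _ = r * μ.real A := by rw [setIntegral_const, smul_eq_mul, mul_comm]

theorem measure_iInter_pos_of_antitone [IsFiniteMeasure μ] {G : ℕ → Set Ω} (hG : Antitone G)
    (hGm : ∀ n, MeasurableSet (G n)) {ε : ℝ} (hε : 0 < ε) {N : ℕ}
    (h : ∀ n, N ≤ n → ε ≤ μ.real (G n)) : 0 < μ (⋂ n, G n) := by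
  rw [hG.measure_iInter (fun n => (hGm n).nullMeasurableSet) ⟨0, measure_ne_top _ _⟩]
  refine (ENNReal.ofReal_pos.2 hε).trans_le (le_iInf fun n => ?_)
  calc ENNReal.ofReal ε ≤ μ (G (max n N)) := by
        rw [← ofReal_measureReal]
        exact ENNReal.ofReal_le_ofReal (h _ (le_max_right n N))
    _ ≤ μ (G n) := measure_mono (hG (le_max_left n N))

end Stopping

namespace PolyaUrnQ

variable {q : ℕ} {Ω : Type*} [MeasurableSpace Ω] (U : PolyaUrnQ q Ω)

def config (n : ℕ) (ω : Ω) : Fin q → ℕ := fun j => U.X n j ω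

def drawn (n : ℕ) (i : Fin q) : Set Ω := {ω | U.X (n + 1) i ω = U.X n i ω + U.m i}

theorem monotone_X (j : Fin q) (ω : Ω) : Monotone fun n => U.X n j ω :=
  monotone_nat_of_le_succ fun n => by
    obtain ⟨i, hi⟩ := U.step n ω
    exact (hi j).symm ▸ Nat.le_add_right _ _

theorem measurable_config {k n : ℕ} (h : k ≤ n) : Measurable[U.𝓕 n] (U.config k) :=
  Measurable.of_comap_le <| by
    rw [U.h𝓕 n]
    exact le_iSup₂ (f := fun i (_ : i ∈ Set.Iic n) =>
      MeasurableSpace.comap (U.config i) inferInstance) k h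

theorem measurableSet_config_preimage {k n : ℕ} (h : k ≤ n) (s : Set (Fin q → ℕ)) :
    MeasurableSet[U.𝓕 n] (U.config k ⁻¹' s) :=
  U.measurable_config h s.to_countable.measurableSet

theorem measurableSet_drawn {k n : ℕ} (h : k + 1 ≤ n) (i : Fin q) :
    MeasurableSet[U.𝓕 n] (U.drawn k i) :=
  ((U.measurable_config h).prodMk (U.measurable_config (by omega)))
    (Set.to_countable {p : (Fin q → ℕ) × (Fin q → ℕ) | p.1 i = p.2 i + U.m i}).measurableSet

theorem config_succ_of_mem_drawn {n : ℕ} {i : Fin q} {ω : Ω} (h : ω ∈ U.drawn n i) :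
    U.config (n + 1) ω = U.config n ω + Pi.single i (U.m i) := by
  obtain ⟨i₀, hi₀⟩ := U.step n ω
  obtain rfl : i = i₀ := by
    by_contra hne
    have := hi₀ i
    have := U.m_pos i
    simp_all [drawn]
  funext j
  simp [config, hi₀ j, Pi.single_apply]

theorem comp_config_succ_eq_sum (f : (Fin q → ℕ) → ℝ) (n : ℕ) (ω : Ω) :
    f (U.config (n + 1) ω)
      = ∑ i, f (U.config n ω + Pi.single i (U.m i)) * (U.drawn n i).indicator 1 ω := by
  obtain ⟨i₀, hi₀⟩ := U.step n ω
  have hmem : ω ∈ U.drawn n i₀ := by simp [drawn, hi₀ i₀]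
  have hnot (i : Fin q) (hi : i ≠ i₀) : ω ∉ U.drawn n i := by
    simp [drawn, hi₀ i, hi, (U.m_pos i).ne']
  rw [Finset.sum_eq_single i₀ (fun i _ hi => by simp [hnot i hi]) (by simp),
    Set.indicator_of_mem hmem, U.config_succ_of_mem_drawn hmem, Pi.one_apply, mul_one]

theorem condExp_indicator_drawn (n : ℕ) (i : Fin q) :
    U.μ[(U.drawn n i).indicator 1 | U.𝓕 n]
      =ᵐ[U.μ] fun ω => (U.X n i ω : ℝ) / ∑ j, (U.X n j ω : ℝ) := by
  convert U.hcond n i using 2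
  funext ω
  simp [drawn, Set.indicator_apply]

theorem condExp_comp_config_succ {f : (Fin q → ℕ) → ℝ} {C : ℝ} (hf : ∀ x, ‖f x‖ ≤ C) (n : ℕ) :
    U.μ[fun ω => f (U.config (n + 1) ω) | U.𝓕 n] =ᵐ[U.μ] fun ω =>
      ∑ i, (U.X n i ω : ℝ) / (∑ j, (U.X n j ω : ℝ)) * f (U.config n ω + Pi.single i (U.m i)) := by
  have := U.isProb
  set g : Fin q → Ω → ℝ := fun i ω => f (U.config n ω + Pi.single i (U.m i)) with hg_def
  have hg (i : Fin q) : StronglyMeasurable[U.𝓕 n] (g i) := by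
    rw [hg_def]
    exact ((measurable_of_countable fun x => f (x + Pi.single i (U.m i))).comp
      (U.measurable_config le_rfl)).stronglyMeasurable
  have hind (i : Fin q) : Integrable ((U.drawn n i).indicator (1 : Ω → ℝ)) U.μ :=
    (integrable_const 1).indicator (U.𝓕.le _ _ (U.measurableSet_drawn le_rfl i))
  have hprod (i : Fin q) : Integrable (g i * (U.drawn n i).indicator 1) U.μ :=
    (hind i).bdd_mul ((hg i).mono (U.𝓕.le n)).aestronglyMeasurable
      (Eventually.of_forall fun _ => hf _)
  have hsum : (fun ω => f (U.config (n + 1) ω)) = ∑ i, g i * (U.drawn n i).indicator 1 := by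
    funext ω
    simp [U.comp_config_succ_eq_sum f n ω, g]
  rw [hsum]
  filter_upwards [condExp_finsetSum (fun i _ => hprod i) (U.𝓕 n),
    ae_all_iff.2 fun i =>
      condExp_mul_of_stronglyMeasurable_left (m := U.𝓕 n) (hg i) (hprod i) (hind i),
    ae_all_iff.2 fun i => U.condExp_indicator_drawn n i] with ω hsum hmul hdraw
  rw [hsum, Finset.sum_apply]
  refine Finset.sum_congr rfl fun i _ => ?_
  rw [hmul i, Pi.mul_apply, hdraw i, mul_comm]

variable {c : Fin q}

theorem supermartingale_rivalWeight (hm : ∀ j, U.m j ≤ U.m c) (hc : ∀ ω, 0 < U.X 0 c ω) :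
    Supermartingale (fun n ω => rivalWeight c (U.config n ω)) U.𝓕 U.μ := by
  have := U.isProb
  have hbdd (x : Fin q → ℕ) : ‖rivalWeight c x‖ ≤ q := by
    rw [Real.norm_of_nonneg (rivalWeight_nonneg x)]
    exact rivalWeight_le x
  have hmeas (n : ℕ) : StronglyMeasurable[U.𝓕 n] fun ω => rivalWeight c (U.config n ω) :=
    ((measurable_of_countable (rivalWeight c)).comp (U.measurable_config le_rfl)).stronglyMeasurable
  refine supermartingale_nat hmeas (fun n => ?_) fun n => ?_
  · exact .of_bound ((hmeas n).mono (U.𝓕.le n)).aestronglyMeasurable q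
      (Eventually.of_forall fun ω => hbdd _)
  · filter_upwards [U.condExp_comp_config_succ hbdd n] with ω hω
    rw [hω]
    exact sum_mul_rivalWeight_add_single_le U.m hm
      ((hc ω).trans_le (U.monotone_X c ω (Nat.zero_le n)))

theorem measure_inter_drawn_pos {n : ℕ} {i : Fin q} {C : Set Ω} (hC : MeasurableSet[U.𝓕 n] C)
    (hμC : 0 < U.μ C) (hpos : ∀ ω, 0 < U.X n i ω) : 0 < U.μ (C ∩ U.drawn n i) := by
  have := U.isProb
  have hD := U.𝓕.le _ _ (U.measurableSet_drawn (k := n) le_rfl i)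
  have hprob (ω : Ω) : 0 < (U.X n i ω : ℝ) / ∑ j, (U.X n j ω : ℝ) :=
    div_pos (Nat.cast_pos.2 (hpos ω)) <| (Nat.cast_pos.2 (hpos ω)).trans_le
      (Finset.single_le_sum (f := fun j => (U.X n j ω : ℝ)) (fun _ _ => by positivity)
        (Finset.mem_univ i))
  have hint : Integrable (fun ω => (U.X n i ω : ℝ) / ∑ j, (U.X n j ω : ℝ)) U.μ :=
    integrable_condExp.congr (U.condExp_indicator_drawn n i)
  have hpos_int : 0 < ∫ ω in C, (U.X n i ω : ℝ) / ∑ j, (U.X n j ω : ℝ) ∂U.μ :=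
    (setIntegral_pos_iff_support_of_nonneg_ae (Eventually.of_forall fun ω => (hprob ω).le)
      hint.integrableOn).2 (hμC.trans_le (measure_mono fun ω hω => ⟨(hprob ω).ne', hω⟩))
  rw [← integral_congr_ae (ae_restrict_of_ae (U.condExp_indicator_drawn n i)),
    setIntegral_condExp (U.𝓕.le n) ((integrable_const 1).indicator hD) hC,
    setIntegral_indicator hD, Pi.one_def, setIntegral_const, smul_eq_mul, mul_one] at hpos_int
  exact pos_iff_ne_zero.2 fun h => by simp [Measure.real, h] at hpos_int

theorem config_eq_of_forall_mem_drawn {k : ℕ} {ω : Ω} (h : ∀ l < k, ω ∈ U.drawn l c) :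
    U.config k ω = U.config 0 ω + k • Pi.single c (U.m c) := by
  induction k with
  | zero => simp
  | succ k ih =>
    rw [U.config_succ_of_mem_drawn (h k k.lt_succ_self), ih fun l hl => h l (by omega),
      succ_nsmul, add_assoc]

theorem measurableSet_forall_mem_drawn (c : Fin q) (N : ℕ) :
    MeasurableSet[U.𝓕 N] {ω | ∀ k < N, ω ∈ U.drawn k c} := by
  simp only [Set.ofPred_forall]
  exact MeasurableSet.iInter fun k => MeasurableSet.iInter fun hk => U.measurableSet_drawn hk c

theorem measure_forall_mem_drawn_pos (hc : ∀ ω, 0 < U.X 0 c ω) {B : Set Ω}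
    (hB : MeasurableSet[U.𝓕 0] B) (hμB : 0 < U.μ B) (N : ℕ) :
    0 < U.μ (B ∩ {ω | ∀ k < N, ω ∈ U.drawn k c}) := by
  induction N with
  | zero => simpa using hμB
  | succ N ih =>
    have hmeas : MeasurableSet[U.𝓕 N] (B ∩ {ω | ∀ k < N, ω ∈ U.drawn k c}) :=
      (U.𝓕.mono (Nat.zero_le N) _ hB).inter (U.measurableSet_forall_mem_drawn c N)
    have hsplit : B ∩ {ω | ∀ k < N + 1, ω ∈ U.drawn k c}
        = B ∩ {ω | ∀ k < N, ω ∈ U.drawn k c} ∩ U.drawn N c := by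
      ext ω
      simp only [Set.mem_inter_iff, Set.mem_ofPred_eq, Nat.lt_succ_iff_lt_or_eq, or_imp,
        forall_and, forall_eq, and_assoc]
    rw [hsplit]
    exact U.measure_inter_drawn_pos hmeas ih fun ω =>
      (hc ω).trans_le (U.monotone_X c ω (Nat.zero_le N))

theorem exists_measure_pos_rivalWeight_le (hc : ∀ ω, 0 < U.X 0 c ω)
    (hplur : ∀ ω, HasPlurality c (U.config 0 ω)) :
    ∃ N, ∃ A, MeasurableSet[U.𝓕 N] A ∧ 0 < U.μ A ∧
      (∀ ω ∈ A, ∀ k < N, HasPlurality c (U.config k ω)) ∧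
      ∀ ω ∈ A, rivalWeight c (U.config N ω) ≤ 1 / 4 := by
  have := U.isProb
  set B : ℕ → Set Ω := fun K => U.config 0 ⁻¹' {x | ∑ j ∈ Finset.univ.erase c, x j ≤ K}
  have hcover : ⋃ K, B K = Set.univ := Set.iUnion_eq_univ_iff.2 fun ω =>
    ⟨_, le_refl (∑ j ∈ Finset.univ.erase c, U.X 0 j ω)⟩
  obtain ⟨K, hK⟩ : ∃ K, 0 < U.μ (B K) :=
    exists_measure_pos_of_not_measure_iUnion_null (by simp [hcover])
  refine ⟨4 * K + 1, B K ∩ {ω | ∀ k < 4 * K + 1, ω ∈ U.drawn k c},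
    (U.measurableSet_config_preimage (Nat.zero_le _) _).inter
      (U.measurableSet_forall_mem_drawn c _),
    U.measure_forall_mem_drawn_pos hc (U.measurableSet_config_preimage le_rfl _) hK _,
    fun ω hω k hk => ?_, fun ω hω => ?_⟩
  · rw [U.config_eq_of_forall_mem_drawn fun l hl => hω.2 l (hl.trans hk)]
    exact (hplur ω).add_nsmul_single _ _
  · have hsum : ∑ j ∈ Finset.univ.erase c, (U.config 0 ω j : ℝ) ≤ K := by exact_mod_cast hω.1
    rw [U.config_eq_of_forall_mem_drawn hω.2]
    refine (rivalWeight_add_nsmul_single_le _ (by omega) (U.m_pos c)).trans ?_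
    rw [div_le_iff₀ (by positivity)]
    push_cast
    linarith

end PolyaUrnQ

open PolyaUrnQ

theorem stmt14_general {q : ℕ} {Ω : Type*} [MeasurableSpace Ω] (U : PolyaUrnQ q Ω)
    (c : Fin q) (hm : ∀ j, U.m j ≤ U.m c)
    (hinit : ∀ j ω, 1 ≤ U.X 0 j ω)
    (hplur : ∀ ω, ∀ j, j ≠ c → U.X 0 j ω < U.X 0 c ω) :
    0 < U.μ {ω | ∀ n, ∀ j, j ≠ c → U.X n j ω < U.X n c ω} := by
  have := U.isProb
  have hc (ω : Ω) : 0 < U.X 0 c ω := hinit c ω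
  obtain ⟨N, A, hA, hApos, hAP, hAW⟩ := U.exists_measure_pos_rivalWeight_le hc hplur
  set G : ℕ → Set Ω := fun n => {ω | ∀ k < n, HasPlurality c (U.config k ω)}
  have hP (n : ℕ) : MeasurableSet[U.𝓕 n] {ω | HasPlurality c (U.config n ω)} :=
    U.measurableSet_config_preimage le_rfl {x | HasPlurality c x}
  have hGm (n : ℕ) : MeasurableSet (G n) := U.𝓕.le n _ (measurableSet_forall_lt hP n.le_succ)
  have hbound (n : ℕ) (hn : N ≤ n) : U.μ.real A / 2 ≤ U.μ.real (G n) := by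
    have hexit := (U.supermartingale_rivalWeight hm hc).mul_measureReal_diff_forall_lt_le
      (fun _ _ => rivalWeight_nonneg _) hP (by norm_num)
      (fun n ω => half_le_rivalWeight ((hc ω).trans_le (U.monotone_X c ω (Nat.zero_le n))))
      hA hAP hAW hn
    have := measureReal_inter_add_sdiff (μ := U.μ) (s := A) (hGm n)
    have := measureReal_mono (μ := U.μ) (Set.inter_subset_right : A ∩ G n ⊆ G n)
    linarith
  have hanti : Antitone G := fun a b hab ω hω k hk => hω k (hk.trans_le hab)
  exact (measure_iInter_pos_of_antitone hanti hGm
    (half_pos (ENNReal.toReal_pos hApos.ne' (measure_ne_top _ _))) hbound).trans_le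
    (measure_mono fun ω hω n => Set.mem_iInter.1 hω (n + 1) n n.lt_succ_self)

/-- In the `q`-colour unfair Pólya urn where colour `c` satisfies `m c ≥ m j` for all `j`,
if initially colour `c` holds a plurality (strictly more balls than each other colour
individually), then with positive probability colour `c` holds a plurality at every
time `n ≥ 0`. -/
theorem stmt14 {q : ℕ} {Ω : Type*} [MeasurableSpace Ω] (U : PolyaUrnQ q Ω)
    (hq : 2 ≤ q) (c : Fin q) (hm : ∀ j, U.m j ≤ U.m c)
    (hinit : ∀ j ω, 1 ≤ U.X 0 j ω)
    (hplur : ∀ ω, ∀ j, j ≠ c → U.X 0 j ω < U.X 0 c ω) :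
    0 < U.μ {ω | ∀ n, ∀ j, j ≠ c → U.X n j ω < U.X n c ω} :=
  stmt14_general U c hm hinit hplur
end
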